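/- For distinct square-free positive integers s₁, ..., sₘ and integers c₁, ..., cₘ not all zero, the sum ∑ᵢ cᵢ√sᵢ is nonzero. -/

import Mathlib

/-!
Write each squarefree number as the product of its prime factors; it then suffices that the
numbers `√(∏ T)`, for `T` ranging over the subsets of a finite set `P` of primes, are linearly
independent over `ℚ`. Every element of `K(√p)` has the form `a + b√p` with `a, b ∈ K`, so if
`√p ∉ K` and `√n ∈ K(√p)` with `n ∈ K`, squaring shows `√n ∈ K` or `√(pn) ∈ K`. By induction
on `P` this gives `√(∏ Q) ∉ ℚ(√p : p ∈ P)` for every nonempty set `Q` of primes disjoint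
from `P`, starting from the irrationality of `√n` for squarefree `n > 1`. Finally, a vanishing
rational combination of the `√(∏ T)`, `T ⊆ P ∪ {p}`, splits as `A + B√p` with
`A, B ∈ ℚ(√q : q ∈ P)`, hence `A = B = 0`, and induction on `P` applies to both.
-/

namespace Subfield

variable {L : Type*} [Field L] {K : Subfield L} {α : L}

theorem exists_add_mul_of_mem_closure_insert (hα : α * α ∈ K) {x : L}
    (hx : x ∈ closure (insert α (K : Set L))) : ∃ a ∈ K, ∃ b ∈ K, x = a + b * α := by
  induction hx using closure_induction with
  | mem y hy =>
    rcases hy with rfl | hy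
    · exact ⟨0, zero_mem _, 1, one_mem _, by ring⟩
    · exact ⟨y, hy, 0, zero_mem _, by ring⟩
  | one => exact ⟨1, one_mem _, 0, zero_mem _, by ring⟩
  | add y z _ _ hy hz =>
    obtain ⟨a, ha, b, hb, rfl⟩ := hy
    obtain ⟨c, hc, d, hd, rfl⟩ := hz
    exact ⟨a + c, add_mem ha hc, b + d, add_mem hb hd, by ring⟩
  | neg y _ hy =>
    obtain ⟨a, ha, b, hb, rfl⟩ := hy
    exact ⟨-a, neg_mem ha, -b, neg_mem hb, by ring⟩
  | mul y z _ _ hy hz =>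
    obtain ⟨a, ha, b, hb, rfl⟩ := hy
    obtain ⟨c, hc, d, hd, rfl⟩ := hz
    exact ⟨a * c + b * d * (α * α), add_mem (mul_mem ha hc) (mul_mem (mul_mem hb hd) hα),
      a * d + b * c, add_mem (mul_mem ha hd) (mul_mem hb hc), by ring⟩
  | inv y _ hy =>
    obtain ⟨a, ha, b, hb, rfl⟩ := hy
    -- `(a + bα)⁻¹ = (a - bα) / N`, unless `N = 0`, in which case `a + bα` is `0` or `a + a`
    set N := a * a - b * b * (α * α)
    have hN : N ∈ K := sub_mem (mul_mem ha ha) (mul_mem (mul_mem hb hb) hα)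
    have hconj : (a + b * α) * (a - b * α) = N := by ring
    by_cases hN0 : N = 0
    · rcases mul_eq_zero.mp (hconj.trans hN0) with h | h
      · exact ⟨0, zero_mem _, 0, zero_mem _, by rw [h]; simp⟩
      · have : a + b * α = a + a := by linear_combination -h
        exact ⟨(a + a)⁻¹, inv_mem (add_mem ha ha), 0, zero_mem _, by rw [this]; ring⟩
    · have hinv : (a + b * α)⁻¹ = (a - b * α) / N :=
        inv_eq_of_mul_eq_one_right (by rw [← mul_div_assoc, hconj, div_self hN0])
      exact ⟨a / N, div_mem ha hN, -b / N, div_mem (neg_mem hb) hN, by rw [hinv]; ring⟩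

theorem eq_zero_of_add_mul_eq_zero (hαK : α ∉ K) {a b : L} (ha : a ∈ K) (hb : b ∈ K)
    (h : a + b * α = 0) : a = 0 ∧ b = 0 := by
  have hb0 : b = 0 := by
    by_contra hb0
    have hα : α = -a / b := by field_simp; linear_combination h
    exact hαK (hα ▸ div_mem (neg_mem ha) hb)
  exact ⟨by simpa [hb0] using h, hb0⟩

theorem mem_or_mul_mem_of_mem_closure_insert [NeZero (2 : L)] {β : L} (hα : α * α ∈ K)
    (hβ : β * β ∈ K) (hαK : α ∉ K) (hβα : β ∈ closure (insert α (K : Set L))) :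
    β ∈ K ∨ α * β ∈ K := by
  obtain ⟨a, ha, b, hb, rfl⟩ := exists_add_mul_of_mem_closure_insert hα hβα
  have hsquare :
      (a * a + b * b * (α * α) - (a + b * α) * (a + b * α)) + 2 * a * b * α = 0 := by
    ring
  have h2ab := (eq_zero_of_add_mul_eq_zero hαK
    (sub_mem (add_mem (mul_mem ha ha) (mul_mem (mul_mem hb hb) hα)) hβ)
    (mul_mem (mul_mem (ofNat_mem K 2) ha) hb) hsquare).2
  rcases mul_eq_zero.mp h2ab with h | rfl
  · obtain rfl : a = 0 := (mul_eq_zero.mp h).resolve_left two_ne_zero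
    right
    simpa [mul_left_comm] using mul_mem hb hα
  · left
    simpa using ha

end Subfield

open Real Finset

noncomputable def sqrtField (P : Finset ℕ) : Subfield ℝ :=
  Subfield.closure ((fun p : ℕ => √(p : ℝ)) '' P)

theorem sqrt_prod_mem_sqrtField {P T : Finset ℕ} (hTP : T ⊆ P) :
    √(∏ t ∈ T, (t : ℝ)) ∈ sqrtField P := by
  rw [sqrt_prod _ fun t _ => t.cast_nonneg]
  exact prod_mem fun t ht => Subfield.subset_closure ⟨t, hTP ht, rfl⟩

theorem sqrtField_insert_le (p : ℕ) (P : Finset ℕ) :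
    sqrtField (insert p P) ≤ Subfield.closure (insert √(p : ℝ) (sqrtField P : Set ℝ)) := by
  rw [sqrtField, coe_insert, Set.image_insert_eq]
  exact Subfield.closure_mono (Set.insert_subset_insert Subfield.subset_closure)

theorem sqrtField_empty_le : sqrtField ∅ ≤ (Rat.castHom ℝ).fieldRange :=
  Subfield.closure_le.mpr (by simp)

theorem irrational_sqrt_prod_primes {Q : Finset ℕ} (hQ : ∀ q ∈ Q, q.Prime) (hne : Q.Nonempty) :
    Irrational √(∏ q ∈ Q, (q : ℝ)) := by
  have hsf : Squarefree (∏ q ∈ Q, q) :=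
    squarefree_prod_of_pairwise_isCoprime
      (fun p hp q hq hpq => Nat.coprime_iff_isRelPrime.mp <|
        (Nat.coprime_primes (hQ p hp) (hQ q hq)).mpr hpq)
      fun q hq => (hQ q hq).prime.squarefree
  rw [← Nat.cast_prod, irrational_sqrt_natCast_iff]
  rintro ⟨k, hk⟩
  obtain ⟨p, hp⟩ := hne
  have hpk : p ∣ k := (hQ p hp).dvd_mul.mp (hk ▸ dvd_prod_of_mem _ hp) |>.elim id id
  exact (hQ p hp).not_isUnit (hsf p (hk ▸ mul_dvd_mul hpk hpk))

theorem sqrt_prod_notMem_sqrtField {P Q : Finset ℕ} (hP : ∀ p ∈ P, p.Prime)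
    (hQ : ∀ q ∈ Q, q.Prime) (hPQ : Disjoint P Q) (hne : Q.Nonempty) :
    √(∏ q ∈ Q, (q : ℝ)) ∉ sqrtField P := by
  induction P using Finset.induction_on generalizing Q with
  | empty =>
    intro hmem
    obtain ⟨r, hr⟩ := RingHom.mem_fieldRange.mp (sqrtField_empty_le hmem)
    exact irrational_sqrt_prod_primes hQ hne ⟨r, hr⟩
  | insert p P hpP ih =>
    have hp := hP p (mem_insert_self p P)
    have hP' : ∀ q ∈ P, q.Prime := fun q hq => hP q (mem_insert_of_mem hq)
    have hpQ : p ∉ Q := disjoint_left.mp hPQ (mem_insert_self p P)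
    have hPQ' : Disjoint P Q := disjoint_of_subset_left (subset_insert p P) hPQ
    have hsqrt_p : √(p : ℝ) ∉ sqrtField P := by
      simpa using ih (Q := {p}) hP' (by simpa using hp) (by simpa using hpP) (singleton_nonempty p)
    intro hmem
    rcases Subfield.mem_or_mul_mem_of_mem_closure_insert
        (by rw [mul_self_sqrt p.cast_nonneg]; exact natCast_mem _ p)
        (by rw [mul_self_sqrt (prod_nonneg fun q _ => q.cast_nonneg)]
            exact prod_mem fun q _ => natCast_mem _ q)
        hsqrt_p (sqrtField_insert_le p P hmem) with h | h
    · exact ih hP' hQ hPQ' hne h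
    · refine ih hP' (forall_mem_insert _ _ _ |>.mpr ⟨hp, hQ⟩)
        (disjoint_insert_right.mpr ⟨hpP, hPQ'⟩) (insert_nonempty p Q) ?_
      rwa [prod_insert hpQ, sqrt_mul p.cast_nonneg]

theorem sqrt_prime_notMem_sqrtField {P : Finset ℕ} {p : ℕ} (hP : ∀ q ∈ P, q.Prime)
    (hp : p.Prime) (hpP : p ∉ P) : √(p : ℝ) ∉ sqrtField P := by
  simpa using sqrt_prod_notMem_sqrtField (Q := {p}) hP (by simpa using hp) (by simpa using hpP)
    (singleton_nonempty p)

theorem linearIndepOn_sqrt_prod_powerset {P : Finset ℕ} (hP : ∀ p ∈ P, p.Prime) :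
    LinearIndepOn ℚ (fun T : Finset ℕ => √(∏ t ∈ T, (t : ℝ))) (P.powerset : Set (Finset ℕ)) := by
  induction P using Finset.induction_on with
  | empty => simp
  | insert p P hpP ih =>
    have hP' : ∀ q ∈ P, q.Prime := fun q hq => hP q (mem_insert_of_mem hq)
    have hsqrt_p : √(p : ℝ) ∉ sqrtField P :=
      sqrt_prime_notMem_sqrtField hP' (hP p (mem_insert_self p P)) hpP
    have hsum_mem (g : Finset ℕ → ℚ) :
        ∑ T ∈ P.powerset, g T • √(∏ t ∈ T, (t : ℝ)) ∈ sqrtField P :=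
      sum_mem fun T hT => SubfieldClass.qsmul_mem _ _ (sqrt_prod_mem_sqrtField (mem_powerset.mp hT))
    have hsplit (g : Finset ℕ → ℚ) :
        ∑ T ∈ (insert p P).powerset, g T • √(∏ t ∈ T, (t : ℝ)) =
          ∑ T ∈ P.powerset, g T • √(∏ t ∈ T, (t : ℝ)) +
            (∑ T ∈ P.powerset, g (insert p T) • √(∏ t ∈ T, (t : ℝ))) * √(p : ℝ) := by
      rw [sum_powerset_insert hpP, sum_mul]
      congr 1
      refine sum_congr rfl fun T hT => ?_
      rw [prod_insert (fun hpT => hpP (mem_powerset.mp hT hpT)), sqrt_mul p.cast_nonneg,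
        smul_mul_assoc, mul_comm]
    replace ih := linearIndepOn_finset_iff.mp (ih hP')
    rw [linearIndepOn_finset_iff]
    intro g hg
    obtain ⟨hA, hB⟩ := Subfield.eq_zero_of_add_mul_eq_zero hsqrt_p (hsum_mem g)
      (hsum_mem fun T => g (insert p T)) ((hsplit g).symm.trans hg)
    intro T hT
    rw [powerset_insert, mem_union, mem_image] at hT
    rcases hT with hT | ⟨S, hS, rfl⟩
    · exact ih g hA T hT
    · exact ih (fun T => g (insert p T)) hB S hS

theorem linearIndepOn_sqrt_squarefree :
    LinearIndepOn ℚ (fun n : ℕ => √(n : ℝ)) {n | Squarefree n} := by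
  refine linearIndepOn_of_finite _ fun t ht htfin => ?_
  set P := htfin.toFinset.biUnion Nat.primeFactors
  have hP : ∀ p ∈ P, p.Prime := by
    simp only [P, mem_biUnion]
    rintro p ⟨n, -, hp⟩
    exact Nat.prime_of_mem_primeFactors hp
  have hsub : t ⊆ (fun T : Finset ℕ => ∏ q ∈ T, q) '' P.powerset := by
    intro n hn
    refine ⟨n.primeFactors, ?_, Nat.prod_primeFactors_of_squarefree (ht hn)⟩
    exact mem_powerset.mpr (subset_biUnion_of_mem _ (htfin.mem_toFinset.mpr hn))
  refine LinearIndepOn.mono (LinearIndepOn.image_of_comp _ _ ?_) hsub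
  simpa [Function.comp_def] using linearIndepOn_sqrt_prod_powerset hP

theorem ussr_stmt_3_general (m : ℕ) (s : Fin m → ℕ)
    (hsq : ∀ i, Squarefree (s i)) (hinj : Function.Injective s)
    (c : Fin m → ℤ) (hc : ¬ ∀ i, c i = 0) :
    ∑ i, (c i : ℝ) * Real.sqrt (s i) ≠ 0 := by
  have hli : LinearIndependent ℤ fun i => √(s i : ℝ) :=
    (linearIndepOn_sqrt_squarefree.linearIndependent.comp (fun i => ⟨s i, hsq i⟩)
      fun i j hij => hinj (congrArg Subtype.val hij)).restrict_scalars' ℤ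
  intro h
  exact hc (Fintype.linearIndependent_iff.mp hli c (by simpa [zsmul_eq_mul] using h))

theorem ussr_stmt_3 (m : ℕ) (s : Fin m → ℕ) (hpos : ∀ i, 0 < s i)
    (hsq : ∀ i, Squarefree (s i)) (hinj : Function.Injective s)
    (c : Fin m → ℤ) (hc : ¬ ∀ i, c i = 0) :
    ∑ i, (c i : ℝ) * Real.sqrt (s i) ≠ 0 :=
  ussr_stmt_3_general m s hsq hinj c hc
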